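/- Proposition 1 (relation between grey and integral-matching estimates, autonomous case): with equally spaced data of step h and u ≡ 0, the grey-model design matrix Y_g (rows [(y(t_{k−1})+y(t_k))ᵀ/2, 1]) and the integral-matching design matrix Y_m (rows [(y_lnt(t_k) − x(t_1))ᵀ, 1]) satisfy Y_m = Y_g Q with Q = [[I_d, 0], [((h−2)/2) x(t_1)ᵀ, 1]]; consequently, if Y_gᵀY_g is invertible, the least-squares estimates satisfy Â_m = Â_g and η̂_m = ĉ_g + Â_g x(t_1) − (h/2) Â_g x(t_1). -/

import Mathlib

/-!
Both cumulative series are affine in the partial sums `S k = ∑ i ∈ Icc 2 k, x i`: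
`y k = x 1 + h • S k` and `ylnt (k + 1) - x 1 = (h / 2) • (x 1 + S k + S (k + 1))`. Hence each row
of `Ym` is the matching row of `Yg` plus `((h - 2) / 2) • x 1` times its constant entry `1`, that is
`Ym = Yg * Q` for the unipotent shear `Q`. Least squares transforms under an invertible change of
design as `((Y Q)ᵀ (Y Q))⁻¹ (Y Q)ᵀ = Q⁻¹ (Yᵀ Y)⁻¹ Yᵀ`, and `Q⁻¹` is the shear by the opposite row.
-/

open Matrix Finset

section LeastSquares

variable {R : Type*} [CommRing R] {m n p : Type*} [Fintype m] [Fintype n] [DecidableEq n]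

noncomputable def leastSquares (Y : Matrix m n R) (X : Matrix m p R) : Matrix n p R :=
  (Yᵀ * Y)⁻¹ * Yᵀ * X

theorem leastSquares_mul_right (Y : Matrix m n R) (X : Matrix m p R) {Q : Matrix n n R}
    (hQ : IsUnit Q.det) : leastSquares (Y * Q) X = Q⁻¹ * leastSquares Y X := by
  have hQt : (Qᵀ)⁻¹ * Qᵀ = 1 := nonsing_inv_mul _ (by rwa [det_transpose])
  have gram : (Y * Q)ᵀ * (Y * Q) = Qᵀ * (Yᵀ * Y) * Q := by
    simp only [transpose_mul, Matrix.mul_assoc]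
  rw [leastSquares, leastSquares, gram, Matrix.mul_inv_rev, Matrix.mul_inv_rev, transpose_mul]
  simp only [Matrix.mul_assoc]
  rw [← Matrix.mul_assoc (Qᵀ)⁻¹, hQt, Matrix.one_mul]

end LeastSquares

section RowShear

variable {R : Type*} [CommRing R] {m n p : Type*} [Fintype n] [DecidableEq n]

def rowShear (c : n → R) : Matrix (n ⊕ Unit) (n ⊕ Unit) R := fromBlocks 1 0 (of fun _ j => c j) 1

theorem rowShear_mul_rowShear_neg (c : n → R) : rowShear c * rowShear (-c) = 1 := by
  ext (i | i) (j | j) <;> simp [rowShear, fromBlocks_multiply, one_apply]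

theorem inv_rowShear (c : n → R) : (rowShear c)⁻¹ = rowShear (-c) :=
  inv_eq_right_inv (rowShear_mul_rowShear_neg c)

theorem isUnit_det_rowShear (c : n → R) : IsUnit (rowShear c).det :=
  isUnit_det_of_right_inverse (rowShear_mul_rowShear_neg c)

theorem mul_rowShear_apply_inl (Y : Matrix m (n ⊕ Unit) R) (c : n → R) (k : m) (i : n) :
    (Y * rowShear c) k (Sum.inl i) = Y k (Sum.inl i) + Y k (Sum.inr ()) * c i := by
  simp [rowShear, mul_apply, one_apply]

theorem mul_rowShear_apply_inr (Y : Matrix m (n ⊕ Unit) R) (c : n → R) (k : m) :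
    (Y * rowShear c) k (Sum.inr ()) = Y k (Sum.inr ()) := by
  simp [rowShear, mul_apply]

theorem rowShear_mul_apply_inl (B : Matrix (n ⊕ Unit) p R) (c : n → R) (j : n) (i : p) :
    (rowShear c * B) (Sum.inl j) i = B (Sum.inl j) i := by
  simp [rowShear, mul_apply, one_apply]

theorem rowShear_mul_apply_inr (B : Matrix (n ⊕ Unit) p R) (c : n → R) (i : p) :
    (rowShear c * B) (Sum.inr ()) i = B (Sum.inr ()) i + ∑ j, c j * B (Sum.inl j) i := by
  simp [rowShear, mul_apply, add_comm]

end RowShear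

theorem Finset.sum_Icc_two_pred_add {M : Type*} [AddCommMonoid M] (x : ℕ → M) {m : ℕ}
    (hm : 1 ≤ m) :
    ∑ i ∈ Icc 2 (m + 1), (x (i - 1) + x i) =
      x 1 + ∑ i ∈ Icc 2 m, x i + ∑ i ∈ Icc 2 (m + 1), x i := by
  induction m, hm using Nat.le_induction with
  | base => simp
  | succ m hm ih =>
    rw [sum_Icc_succ_top (by omega), ih, sum_Icc_succ_top (by omega : 2 ≤ m + 1 + 1),
      sum_Icc_succ_top (by omega : 2 ≤ m + 1), Nat.add_sub_cancel]
    abel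

section CumulativeSeries

variable {E : Type*} [AddCommGroup E] [Module ℝ E] {h : ℝ} {x y ylnt : ℕ → E}

theorem cusum_eq_add_smul_sum (hy1 : y 1 = x 1)
    (hyk : ∀ k, 2 ≤ k → y k = x 1 + ∑ i ∈ Icc 2 k, h • x i) {k : ℕ} (hk : 1 ≤ k) :
    y k = x 1 + h • ∑ i ∈ Icc 2 k, x i := by
  obtain rfl | hk := hk.eq_or_lt
  · simp [hy1]
  · rw [hyk k hk, smul_sum]

theorem trapezoid_sub_eq_midpoint_cusum_add (hy1 : y 1 = x 1)
    (hyk : ∀ k, 2 ≤ k → y k = x 1 + ∑ i ∈ Icc 2 k, h • x i)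
    (hlk : ∀ k, 2 ≤ k → ylnt k = x 1 + (h / 2) • ∑ i ∈ Icc 2 k, (x (i - 1) + x i))
    {m : ℕ} (hm : 1 ≤ m) :
    ylnt (m + 1) - x 1 = (2 : ℝ)⁻¹ • (y m + y (m + 1)) + ((h - 2) / 2) • x 1 := by
  rw [hlk (m + 1) (by omega), sum_Icc_two_pred_add x hm, cusum_eq_add_smul_sum hy1 hyk hm,
    cusum_eq_add_smul_sum hy1 hyk (by omega : 1 ≤ m + 1)]
  module

end CumulativeSeries

theorem grey_vs_integral_matching_estimates_general
    (n d : ℕ) (h : ℝ)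
    (x : ℕ → Fin d → ℝ)
    (y ylnt : ℕ → Fin d → ℝ)
    -- Cusum series with weights h₁ = 1 and hᵢ = h for i ≥ 2
    (hy1 : y 1 = x 1)
    (hyk : ∀ k, 2 ≤ k → y k = x 1 + ∑ i ∈ Finset.Icc 2 k, h • x i)
    -- trapezoid cumulative series
    (hlk : ∀ k, 2 ≤ k → ylnt k = x 1 + (h / 2) • ∑ i ∈ Finset.Icc 2 k, (x (i - 1) + x i))
    -- grey-model design matrix: k-th row [(y(t_{k+1}) + y(t_{k+2}))ᵀ/2, 1]
    (Yg : Matrix (Fin (n - 1)) (Fin d ⊕ Unit) ℝ)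
    (hYg : ∀ k i, Yg k (Sum.inl i) = (y (k.1 + 1) i + y (k.1 + 2) i) / 2)
    (hYg1 : ∀ k, Yg k (Sum.inr ()) = 1)
    -- integral-matching design matrix: k-th row [(y_lnt(t_{k+2}) − x(t_1))ᵀ, 1]
    (Ym : Matrix (Fin (n - 1)) (Fin d ⊕ Unit) ℝ)
    (hYm : ∀ k i, Ym k (Sum.inl i) = ylnt (k.1 + 2) i - x 1 i)
    (hYm1 : ∀ k, Ym k (Sum.inr ()) = 1)
    -- transition matrix Q = [[I_d, 0], [((h−2)/2) x(t_1)ᵀ, 1]]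
    (Q : Matrix (Fin d ⊕ Unit) (Fin d ⊕ Unit) ℝ)
    (hQ : Q = Matrix.fromBlocks 1 0 (Matrix.of fun _ j => ((h - 2) / 2) * x 1 j) 1)
    -- response matrix with rows x(t_{k+2})ᵀ
    (X : Matrix (Fin (n - 1)) (Fin d) ℝ) :
    Ym = Yg * Q ∧
    (IsUnit (Ygᵀ * Yg).det →
      (∀ i j, ((Ymᵀ * Ym)⁻¹ * Ymᵀ * X) (Sum.inl j) i =
        ((Ygᵀ * Yg)⁻¹ * Ygᵀ * X) (Sum.inl j) i) ∧
      (∀ i, ((Ymᵀ * Ym)⁻¹ * Ymᵀ * X) (Sum.inr ()) i =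
        ((Ygᵀ * Yg)⁻¹ * Ygᵀ * X) (Sum.inr ()) i +
          (∑ j, ((Ygᵀ * Yg)⁻¹ * Ygᵀ * X) (Sum.inl j) i * x 1 j) -
          (h / 2) * ∑ j, ((Ygᵀ * Yg)⁻¹ * Ygᵀ * X) (Sum.inl j) i * x 1 j)) := by
  set c : Fin d → ℝ := fun j => (h - 2) / 2 * x 1 j
  replace hQ : Q = rowShear c := hQ
  have hYmQ : Ym = Yg * Q := by
    ext k (i | ⟨⟩)
    · have hrow := congrFun (trapezoid_sub_eq_midpoint_cusum_add hy1 hyk hlk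
        (Nat.le_add_left 1 k.1)) i
      simp only [Pi.sub_apply, Pi.add_apply, Pi.smul_apply, smul_eq_mul] at hrow
      rw [hQ, mul_rowShear_apply_inl, hYm, hYg, hYg1, hrow]
      ring
    · rw [hQ, mul_rowShear_apply_inr, hYm1, hYg1]
  have hest : (Ymᵀ * Ym)⁻¹ * Ymᵀ * X = rowShear (-c) * ((Ygᵀ * Yg)⁻¹ * Ygᵀ * X) := by
    rw [hYmQ, hQ, ← inv_rowShear]
    exact leastSquares_mul_right Yg X (isUnit_det_rowShear c)
  refine ⟨hYmQ, fun _ => ⟨fun i j => ?_, fun i => ?_⟩⟩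
  · rw [hest, rowShear_mul_apply_inl]
  · rw [hest, rowShear_mul_apply_inr, add_sub_assoc, mul_sum, ← sum_sub_distrib]
    congr 1
    exact sum_congr rfl fun j _ => by simp only [c, Pi.neg_apply]; ring

theorem grey_vs_integral_matching_estimates
    (n d : ℕ) (h : ℝ) (hpos : 0 < h)
    (x : ℕ → Fin d → ℝ)
    (y ylnt : ℕ → Fin d → ℝ)
    -- Cusum series with weights h₁ = 1 and hᵢ = h for i ≥ 2
    (hy1 : y 1 = x 1)
    (hyk : ∀ k, 2 ≤ k → y k = x 1 + ∑ i ∈ Finset.Icc 2 k, h • x i)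
    -- trapezoid cumulative series
    (hl1 : ylnt 1 = x 1)
    (hlk : ∀ k, 2 ≤ k → ylnt k = x 1 + (h / 2) • ∑ i ∈ Finset.Icc 2 k, (x (i - 1) + x i))
    -- grey-model design matrix: k-th row [(y(t_{k+1}) + y(t_{k+2}))ᵀ/2, 1]
    (Yg : Matrix (Fin (n - 1)) (Fin d ⊕ Unit) ℝ)
    (hYg : ∀ k i, Yg k (Sum.inl i) = (y (k.1 + 1) i + y (k.1 + 2) i) / 2)
    (hYg1 : ∀ k, Yg k (Sum.inr ()) = 1)
    -- integral-matching design matrix: k-th row [(y_lnt(t_{k+2}) − x(t_1))ᵀ, 1]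
    (Ym : Matrix (Fin (n - 1)) (Fin d ⊕ Unit) ℝ)
    (hYm : ∀ k i, Ym k (Sum.inl i) = ylnt (k.1 + 2) i - x 1 i)
    (hYm1 : ∀ k, Ym k (Sum.inr ()) = 1)
    -- transition matrix Q = [[I_d, 0], [((h−2)/2) x(t_1)ᵀ, 1]]
    (Q : Matrix (Fin d ⊕ Unit) (Fin d ⊕ Unit) ℝ)
    (hQ : Q = Matrix.fromBlocks 1 0 (Matrix.of fun _ j => ((h - 2) / 2) * x 1 j) 1)
    -- response matrix with rows x(t_{k+2})ᵀ
    (X : Matrix (Fin (n - 1)) (Fin d) ℝ)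
    (hX : ∀ k i, X k i = x (k.1 + 2) i) :
    Ym = Yg * Q ∧
    (IsUnit (Ygᵀ * Yg).det →
      (∀ i j, ((Ymᵀ * Ym)⁻¹ * Ymᵀ * X) (Sum.inl j) i =
        ((Ygᵀ * Yg)⁻¹ * Ygᵀ * X) (Sum.inl j) i) ∧
      (∀ i, ((Ymᵀ * Ym)⁻¹ * Ymᵀ * X) (Sum.inr ()) i =
        ((Ygᵀ * Yg)⁻¹ * Ygᵀ * X) (Sum.inr ()) i +
          (∑ j, ((Ygᵀ * Yg)⁻¹ * Ygᵀ * X) (Sum.inl j) i * x 1 j) -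
          (h / 2) * ∑ j, ((Ygᵀ * Yg)⁻¹ * Ygᵀ * X) (Sum.inl j) i * x 1 j)) :=
  grey_vs_integral_matching_estimates_general n d h x y ylnt hy1 hyk hlk Yg hYg hYg1 Ym hYm hYm1 Q
    hQ X
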